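/- arXiv:2008.02242 — 6 statements merged into one kernel-verified Lean document; each statement's English description precedes it below -/
import Mathlib

section
/- Let (X,d) be a metric space, let ε ≥ 0, and for i = 1,2 let η_i : [0,T_i] → X be unit-speed geodesics (T_i ≥ 0). Suppose the Hausdorff distance between the images η₁([0,T₁]) and η₂([0,T₂]) is at most ε. Then |T₁ − T₂| ≤ 2ε, and moreover at least one of the following holds: (i) d(η₁(0),η₂(0)) ≤ 5ε and d(η₁(T₁),η₂(T₂)) ≤ 5ε, or (ii) d(η₁(0),η₂(T₂)) ≤ 5ε and d(η₁(T₁),η₂(0)) ≤ 5ε (i.e. the endpoint bounds hold after possibly reversing the time parametrization of η₂). -/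
/-- A unit-speed geodesic `η : [0,T] → X`: `dist (η s) (η t) = |s - t|` for `s, t ∈ [0,T]`. -/
def IsUnitSpeedGeodesic {X : Type*} [MetricSpace X] (η : ℝ → X) (T : ℝ) : Prop :=
  ∀ s ∈ Set.Icc (0 : ℝ) T, ∀ t ∈ Set.Icc (0 : ℝ) T, dist (η s) (η t) = |s - t|

/-!
The images are compact, so each endpoint `η₁ 0`, `η₁ T₁` lies within `ε` of some `η₂ t₀`, `η₂ t₁`.
Going from `η₁ 0` to `η₁ T₁` through these points gives `T₁ ≤ |t₁ - t₀| + 2ε ≤ T₂ + 2ε`, and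
symmetrically `T₂ ≤ T₁ + 2ε`. Hence the interval between `t₀` and `t₁` misses at most `4ε` of
`[0, T₂]`, so the endpoints of `η₂` are within `4ε` of `η₂ t₀`, `η₂ t₁` (in one of the two orders).
-/

open Set Metric

namespace IsUnitSpeedGeodesic

variable {X : Type*} [MetricSpace X] {η η₁ η₂ : ℝ → X} {T T₁ T₂ : ℝ}

theorem dist_eq_sub (h : IsUnitSpeedGeodesic η T) {s t : ℝ} (hs : s ∈ Icc 0 T)
    (ht : t ∈ Icc 0 T) (hst : s ≤ t) : dist (η s) (η t) = t - s := by
  rw [h s hs t ht, abs_sub_comm, abs_of_nonneg (sub_nonneg.2 hst)]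

theorem reverse (h : IsUnitSpeedGeodesic η T) : IsUnitSpeedGeodesic (fun t ↦ η (T - t)) T := by
  intro s hs t ht
  rw [h _ (sub_mem_Icc_zero_iff_right.2 hs) _ (sub_mem_Icc_zero_iff_right.2 ht), abs_sub_comm]
  ring_nf

theorem isCompact_image (h : IsUnitSpeedGeodesic η T) : IsCompact (η '' Icc 0 T) :=
  isCompact_Icc.image_of_continuousOn <|
    (LipschitzOnWith.mk_one fun s hs t ht ↦ (h s hs t ht).le).continuousOn

theorem length_le_abs_sub_add (h₁ : IsUnitSpeedGeodesic η₁ T₁) (h₂ : IsUnitSpeedGeodesic η₂ T₂)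
    (hT₁ : 0 ≤ T₁) {t₀ t₁ ε : ℝ} (ht₀ : t₀ ∈ Icc 0 T₂) (ht₁ : t₁ ∈ Icc 0 T₂)
    (hd₀ : dist (η₁ 0) (η₂ t₀) ≤ ε) (hd₁ : dist (η₁ T₁) (η₂ t₁) ≤ ε) :
    T₁ ≤ |t₁ - t₀| + 2 * ε := by
  calc T₁ = dist (η₁ 0) (η₁ T₁) := by
        rw [h₁.dist_eq_sub ⟨le_rfl, hT₁⟩ ⟨hT₁, le_rfl⟩ hT₁, sub_zero]
    _ ≤ dist (η₁ 0) (η₂ t₀) + dist (η₂ t₀) (η₂ t₁) + dist (η₂ t₁) (η₁ T₁) := dist_triangle4 ..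
    _ ≤ |t₁ - t₀| + 2 * ε := by
      rw [h₂ t₀ ht₀ t₁ ht₁, abs_sub_comm, dist_comm (η₂ t₁)]
      linarith

theorem length_le_add (h₁ : IsUnitSpeedGeodesic η₁ T₁) (h₂ : IsUnitSpeedGeodesic η₂ T₂)
    (hT₁ : 0 ≤ T₁) {t₀ t₁ ε : ℝ} (ht₀ : t₀ ∈ Icc 0 T₂) (ht₁ : t₁ ∈ Icc 0 T₂)
    (hd₀ : dist (η₁ 0) (η₂ t₀) ≤ ε) (hd₁ : dist (η₁ T₁) (η₂ t₁) ≤ ε) :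
    T₁ ≤ T₂ + 2 * ε := by
  have hspan : |t₁ - t₀| ≤ T₂ :=
    abs_sub_le_iff.2 ⟨by linarith [ht₁.2, ht₀.1], by linarith [ht₀.2, ht₁.1]⟩
  linarith [h₁.length_le_abs_sub_add h₂ hT₁ ht₀ ht₁ hd₀ hd₁]

theorem endpoints_close_of_le (h₁ : IsUnitSpeedGeodesic η₁ T₁) (h₂ : IsUnitSpeedGeodesic η₂ T₂)
    (hT₁ : 0 ≤ T₁) {t₀ t₁ ε : ℝ} (ht₀ : t₀ ∈ Icc 0 T₂) (ht₁ : t₁ ∈ Icc 0 T₂)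
    (hd₀ : dist (η₁ 0) (η₂ t₀) ≤ ε) (hd₁ : dist (η₁ T₁) (η₂ t₁) ≤ ε)
    (hT : T₂ ≤ T₁ + 2 * ε) (ht : t₀ ≤ t₁) :
    dist (η₁ 0) (η₂ 0) ≤ 5 * ε ∧ dist (η₁ T₁) (η₂ T₂) ≤ 5 * ε := by
  have hT₂ : 0 ≤ T₂ := ht₀.1.trans ht₀.2
  have hlen := h₁.length_le_abs_sub_add h₂ hT₁ ht₀ ht₁ hd₀ hd₁
  rw [abs_of_nonneg (sub_nonneg.2 ht)] at hlen
  constructor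
  · calc dist (η₁ 0) (η₂ 0) ≤ dist (η₁ 0) (η₂ t₀) + dist (η₂ 0) (η₂ t₀) := dist_triangle_right ..
      _ ≤ 5 * ε := by
        rw [h₂.dist_eq_sub ⟨le_rfl, hT₂⟩ ht₀ ht₀.1]
        linarith [ht₁.2]
  · calc dist (η₁ T₁) (η₂ T₂) ≤ dist (η₁ T₁) (η₂ t₁) + dist (η₂ t₁) (η₂ T₂) := dist_triangle ..
      _ ≤ 5 * ε := by
        rw [h₂.dist_eq_sub ht₁ ⟨hT₂, le_rfl⟩ ht₁.2]
        linarith [ht₀.1]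

theorem endpoints_close (h₁ : IsUnitSpeedGeodesic η₁ T₁) (h₂ : IsUnitSpeedGeodesic η₂ T₂)
    (hT₁ : 0 ≤ T₁) {t₀ t₁ ε : ℝ} (ht₀ : t₀ ∈ Icc 0 T₂) (ht₁ : t₁ ∈ Icc 0 T₂)
    (hd₀ : dist (η₁ 0) (η₂ t₀) ≤ ε) (hd₁ : dist (η₁ T₁) (η₂ t₁) ≤ ε)
    (hT : T₂ ≤ T₁ + 2 * ε) :
    (dist (η₁ 0) (η₂ 0) ≤ 5 * ε ∧ dist (η₁ T₁) (η₂ T₂) ≤ 5 * ε) ∨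
      (dist (η₁ 0) (η₂ T₂) ≤ 5 * ε ∧ dist (η₁ T₁) (η₂ 0) ≤ 5 * ε) := by
  rcases le_total t₀ t₁ with ht | ht
  · exact Or.inl (h₁.endpoints_close_of_le h₂ hT₁ ht₀ ht₁ hd₀ hd₁ hT ht)
  · right
    simpa only [sub_zero, sub_self, sub_sub_cancel] using
      h₁.endpoints_close_of_le h₂.reverse hT₁ (sub_mem_Icc_zero_iff_right.2 ht₀)
        (sub_mem_Icc_zero_iff_right.2 ht₁)
        (by simpa only [sub_sub_cancel] using hd₀) (by simpa only [sub_sub_cancel] using hd₁) hT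
        (by linarith)

end IsUnitSpeedGeodesic

theorem Metric.exists_dist_le_of_hausdorffEDist_le {X : Type*} [PseudoMetricSpace X]
    {A B : Set X} {x : X} {ε : ℝ} (hB : IsCompact B) (hε : 0 ≤ ε)
    (hAB : hausdorffEDist A B ≤ ENNReal.ofReal ε) (hx : x ∈ A) : ∃ y ∈ B, dist x y ≤ ε := by
  have hinf : infEDist x B ≤ ENNReal.ofReal ε := (infEDist_le_hausdorffEDist_of_mem hx).trans hAB
  rcases B.eq_empty_or_nonempty with rfl | hne
  · simp at hinf
  obtain ⟨y, hy, hxy⟩ := hB.exists_infEDist_eq_edist hne x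
  exact ⟨y, hy, (edist_le_ofReal hε).1 (hxy ▸ hinf)⟩

/-- Two geodesics at Hausdorff distance at most `ε` have lengths within `2ε`,
and (after possibly reversing the time of `η₂`) endpoints within `5ε`. -/
theorem geodesics_hausdorff_close {X : Type*} [MetricSpace X] (ε T₁ T₂ : ℝ) (hε : 0 ≤ ε)
    (hT₁ : 0 ≤ T₁) (hT₂ : 0 ≤ T₂) (η₁ η₂ : ℝ → X)
    (h₁ : IsUnitSpeedGeodesic η₁ T₁) (h₂ : IsUnitSpeedGeodesic η₂ T₂)
    (hH : EMetric.hausdorffEdist (η₁ '' Set.Icc 0 T₁) (η₂ '' Set.Icc 0 T₂) ≤ ENNReal.ofReal ε) :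
    |T₁ - T₂| ≤ 2 * ε ∧
      ((dist (η₁ 0) (η₂ 0) ≤ 5 * ε ∧ dist (η₁ T₁) (η₂ T₂) ≤ 5 * ε) ∨
        (dist (η₁ 0) (η₂ T₂) ≤ 5 * ε ∧ dist (η₁ T₁) (η₂ 0) ≤ 5 * ε)) := by
  have near₁ {s : ℝ} (hs : s ∈ Icc 0 T₁) : ∃ t ∈ Icc 0 T₂, dist (η₁ s) (η₂ t) ≤ ε := by
    obtain ⟨_, ⟨t, ht, rfl⟩, hd⟩ :=
      exists_dist_le_of_hausdorffEDist_le h₂.isCompact_image hε hH (mem_image_of_mem η₁ hs)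
    exact ⟨t, ht, hd⟩
  have near₂ {t : ℝ} (ht : t ∈ Icc 0 T₂) : ∃ s ∈ Icc 0 T₁, dist (η₂ t) (η₁ s) ≤ ε := by
    obtain ⟨_, ⟨s, hs, rfl⟩, hd⟩ := exists_dist_le_of_hausdorffEDist_le h₁.isCompact_image hε
      (hausdorffEDist_comm.trans_le hH) (mem_image_of_mem η₂ ht)
    exact ⟨s, hs, hd⟩
  obtain ⟨t₀, ht₀, hd₀⟩ := near₁ ⟨le_rfl, hT₁⟩
  obtain ⟨t₁, ht₁, hd₁⟩ := near₁ ⟨hT₁, le_rfl⟩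
  obtain ⟨s₀, hs₀, he₀⟩ := near₂ ⟨le_rfl, hT₂⟩
  obtain ⟨s₁, hs₁, he₁⟩ := near₂ ⟨hT₂, le_rfl⟩
  have hT₁₂ : T₁ ≤ T₂ + 2 * ε := h₁.length_le_add h₂ hT₁ ht₀ ht₁ hd₀ hd₁
  have hT₂₁ : T₂ ≤ T₁ + 2 * ε := h₂.length_le_add h₁ hT₂ hs₀ hs₁ he₀ he₁
  exact ⟨abs_sub_le_iff.2 ⟨by linarith, by linarith⟩,
    h₁.endpoints_close h₂ hT₁ ht₀ ht₁ hd₀ hd₁ hT₂₁⟩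
end

section
/- Let (S,d) be a nonempty compact geodesic metric space that is homeomorphic to the 2-sphere S². Then for every R with 0 < R < diam(S) there exists r₀ > 0 such that for all r ∈ (0,r₀) and all z ∈ S, at most one connected component of S ∖ B(z,r) has diameter at least R. -/
/-!
A component of `S \ B(z, r)` of diameter `≥ R` contains a point at distance `≥ R/3` from `z`.
Since the complement of a point of a topological sphere is path connected, two such points `u, v`
are joined by a path avoiding `z`, hence staying at some distance `δ > 0` from `z`. When `r`,
`d(z', z)`, `d(u', u)`, `d(v', v)` are all below `δ / 4`, that path together with geodesics
`u ⇝ u'` and `v ⇝ v'` is a connected set avoiding `B(z', r)`. Compactness of the set of triples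
`(z, u, v)` with `d(u, z), d(v, z) ≥ R/3` makes the choice of `r` uniform.
-/

open Metric Set Filter Topology

lemma isPathConnected_sphere_compl_singleton {E : Type*} [NormedAddCommGroup E]
    [InnerProductSpace ℝ E] {n : ℕ} [Fact (Module.finrank ℝ E = n + 1)] (v : sphere (0 : E) 1) :
    IsPathConnected ({v}ᶜ : Set (sphere (0 : E) 1)) := by
  have h := (convex_univ : Convex ℝ (univ : Set (EuclideanSpace ℝ (Fin n)))).isPathConnected
    univ_nonempty |>.image' (f := (stereographic' n v).symm)
    (by rw [← stereographic'_target v]; exact (stereographic' n v).continuousOn_symm)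
  rwa [← stereographic'_target v, (stereographic' n v).symm_image_target_eq_source,
    stereographic'_source] at h

lemma Homeomorph.isPathConnected_compl_singleton {X Y : Type*} [TopologicalSpace X]
    [TopologicalSpace Y] (e : X ≃ₜ Y) (hY : ∀ y : Y, IsPathConnected ({y}ᶜ : Set Y)) (x : X) :
    IsPathConnected ({x}ᶜ : Set X) := by
  simpa [preimage_compl, ← image_singleton, e.preimage_image] using
    e.isPathConnected_preimage.mpr (hY (e x))

section Geodesic

variable {X : Type*} [MetricSpace X] {η : ℝ → X} {T : ℝ}

lemma IsUnitSpeedGeodesic.isPreconnected_image (hη : IsUnitSpeedGeodesic η T) :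
    IsPreconnected (η '' Icc 0 T) := by
  refine isPreconnected_Icc.image _ (LipschitzOnWith.continuousOn (K := 1) fun s hs t ht => ?_)
  rw [edist_dist, edist_dist, hη s hs t ht, Real.dist_eq, ENNReal.coe_one, one_mul]

lemma IsUnitSpeedGeodesic.image_subset_closedBall (hη : IsUnitSpeedGeodesic η T) :
    η '' Icc 0 T ⊆ closedBall (η 0) T := by
  rintro _ ⟨s, hs, rfl⟩
  have h0 : (0 : ℝ) ∈ Icc 0 T := ⟨le_rfl, hs.1.trans hs.2⟩
  rw [mem_closedBall, hη s hs 0 h0, sub_zero, abs_of_nonneg hs.1]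
  exact hs.2

lemma mem_connectedComponentIn_compl_ball_of_geodesic
    (hgeo : ∀ x y : X, ∃ η : ℝ → X,
      IsUnitSpeedGeodesic η (dist x y) ∧ η 0 = x ∧ η (dist x y) = y)
    {x y z : X} {r : ℝ} (h : dist x y + r ≤ dist x z) :
    y ∈ connectedComponentIn (ball z r)ᶜ x := by
  obtain ⟨η, hη, hx, hy⟩ := hgeo x y
  have hT : dist x y ∈ Icc 0 (dist x y) := ⟨dist_nonneg, le_rfl⟩
  refine hη.isPreconnected_image.subset_connectedComponentIn ⟨0, ⟨le_rfl, dist_nonneg⟩, hx⟩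
    (fun w hw => ?_) ⟨_, hT, hy⟩
  have hwx : dist w x ≤ dist x y := hx ▸ hη.image_subset_closedBall hw
  rw [mem_compl_iff, mem_ball, not_lt]
  linarith [dist_triangle x w z, dist_comm x w]

end Geodesic

lemma Path.mem_connectedComponentIn_compl_ball {X : Type*} [PseudoMetricSpace X] {x y z : X}
    {r : ℝ} (γ : Path x y) (hγ : ∀ t, r ≤ dist (γ t) z) :
    y ∈ connectedComponentIn (ball z r)ᶜ x := by
  refine (isConnected_range γ.continuous).isPreconnected.subset_connectedComponentIn
    ⟨0, γ.source⟩ ?_ ⟨1, γ.target⟩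
  rintro _ ⟨t, rfl⟩
  simpa using hγ t

lemma exists_dist_ge_third_of_le_diam {X : Type*} [PseudoMetricSpace X] {A : Set X} {R : ℝ}
    (hR : 0 < R) (hA : R ≤ diam A) (z : X) : ∃ u ∈ A, R / 3 ≤ dist u z := by
  by_contra! h
  have : diam A ≤ 2 * (R / 3) := diam_le_of_forall_dist_le (by positivity) fun a ha b hb =>
    (dist_triangle_right a b z).trans (by linarith [h a ha, h b hb])
  linarith

lemma eventually_connectedComponentIn_compl_ball_eq {X : Type*} [MetricSpace X]
    (hgeo : ∀ x y : X, ∃ η : ℝ → X,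
      IsUnitSpeedGeodesic η (dist x y) ∧ η 0 = x ∧ η (dist x y) = y)
    {z u v : X} (hz : IsPathConnected ({z}ᶜ : Set X)) (hu : u ≠ z) (hv : v ≠ z) :
    ∀ᶠ p : ℝ × X × X × X in 𝓝 (0, z, u, v),
      connectedComponentIn (ball p.2.1 p.1)ᶜ p.2.2.1 =
        connectedComponentIn (ball p.2.1 p.1)ᶜ p.2.2.2 := by
  obtain ⟨γ, hγ⟩ := hz.joinedIn u hu v hv
  obtain ⟨δ, hδ, hball⟩ := Metric.isOpen_iff.mp
    (isCompact_range γ.continuous).isClosed.isOpen_compl z fun ⟨t, ht⟩ => hγ t ht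
  have hγδ : ∀ t, δ ≤ dist (γ t) z := fun t => by
    simpa [dist_comm] using fun h => hball h ⟨t, rfl⟩
  refine Metric.eventually_nhds_iff.mpr ⟨δ / 4, by positivity, ?_⟩
  rintro ⟨r, z', u', v'⟩ hp
  simp only [Prod.dist_eq, max_lt_iff, Real.dist_eq, sub_zero] at hp
  obtain ⟨hr_abs, hz', hu', hv'⟩ := hp
  have hr := (le_abs_self r).trans_lt hr_abs
  have hγz' : ∀ t, 3 * δ / 4 ≤ dist (γ t) z' := fun t => by
    linarith [hγδ t, dist_triangle (γ t) z' z]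
  have hu'' : u' ∈ connectedComponentIn (ball z' r)ᶜ u :=
    mem_connectedComponentIn_compl_ball_of_geodesic hgeo <| by
      linarith [γ.source ▸ hγz' 0, dist_comm u u']
  have hv'' : v' ∈ connectedComponentIn (ball z' r)ᶜ v :=
    mem_connectedComponentIn_compl_ball_of_geodesic hgeo <| by
      linarith [γ.target ▸ hγz' 1, dist_comm v v']
  have huv : v ∈ connectedComponentIn (ball z' r)ᶜ u :=
    γ.mem_connectedComponentIn_compl_ball fun t => by linarith [hγz' t]
  exact (connectedComponentIn_eq hu'').symm.trans
    ((connectedComponentIn_eq huv).trans (connectedComponentIn_eq hv''))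

theorem at_most_one_big_component_general {S : Type*} [MetricSpace S] [CompactSpace S]
    (hgeo : ∀ x y : S, ∃ η : ℝ → S,
      IsUnitSpeedGeodesic η (dist x y) ∧ η 0 = x ∧ η (dist x y) = y)
    (hsphere : Nonempty (S ≃ₜ Metric.sphere (0 : EuclideanSpace ℝ (Fin 3)) 1))
    (R : ℝ) (hR : 0 < R) :
    ∃ r₀ > (0 : ℝ), ∀ r ∈ Set.Ioo (0 : ℝ) r₀, ∀ z u v : S,
      u ∈ (Metric.ball z r)ᶜ → v ∈ (Metric.ball z r)ᶜ →
      R ≤ Metric.diam (connectedComponentIn (Metric.ball z r)ᶜ u) →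
      R ≤ Metric.diam (connectedComponentIn (Metric.ball z r)ᶜ v) →
      connectedComponentIn (Metric.ball z r)ᶜ u = connectedComponentIn (Metric.ball z r)ᶜ v := by
  obtain ⟨e⟩ := hsphere
  have : Fact (Module.finrank ℝ (EuclideanSpace ℝ (Fin 3)) = 2 + 1) := ⟨by simp⟩
  have hpc (z : S) : IsPathConnected ({z}ᶜ : Set S) :=
    e.isPathConnected_compl_singleton (isPathConnected_sphere_compl_singleton (n := 2)) z
  have hK : IsCompact {p : S × S × S | R / 3 ≤ dist p.2.1 p.1 ∧ R / 3 ≤ dist p.2.2 p.1} :=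
    IsClosed.isCompact <|
      .inter (isClosed_le continuous_const (continuous_snd.fst.dist continuous_fst))
        (isClosed_le continuous_const (continuous_snd.snd.dist continuous_fst))
  have hne {a b : S} (h : R / 3 ≤ dist a b) : a ≠ b := dist_pos.mp (by linarith)
  obtain ⟨r₀, hr₀, hjoin⟩ := Metric.eventually_nhds_iff.mp <|
    hK.eventually_forall_of_forall_eventually (x₀ := 0)
      (P := fun r p => connectedComponentIn (ball p.1 r)ᶜ p.2.1 =
        connectedComponentIn (ball p.1 r)ᶜ p.2.2)
      fun ⟨z, _, _⟩ hp =>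
        eventually_connectedComponentIn_compl_ball_eq hgeo (hpc z) (hne hp.1) (hne hp.2)
  refine ⟨r₀, hr₀, fun r hr z u v _ _ hu hv => ?_⟩
  obtain ⟨u', hu', hu'z⟩ := exists_dist_ge_third_of_le_diam hR hu z
  obtain ⟨v', hv', hv'z⟩ := exists_dist_ge_third_of_le_diam hR hv z
  have hr' : dist r 0 < r₀ := by rw [Real.dist_0_eq_abs, abs_of_pos hr.1]; exact hr.2
  rw [connectedComponentIn_eq hu', connectedComponentIn_eq hv']
  exact hjoin hr' (z, u', v') ⟨hu'z, hv'z⟩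

/-- In a nonempty compact geodesic metric space homeomorphic to the 2-sphere, for every
`0 < R < diam S` there exists `r₀ > 0` so that for all `r ∈ (0, r₀)` and all `z`, at most one
connected component of `S \ B(z,r)` has diameter at least `R`. -/
theorem at_most_one_big_component {S : Type*} [MetricSpace S] [Nonempty S] [CompactSpace S]
    (hgeo : ∀ x y : S, ∃ η : ℝ → S,
      IsUnitSpeedGeodesic η (dist x y) ∧ η 0 = x ∧ η (dist x y) = y)
    (hsphere : Nonempty (S ≃ₜ Metric.sphere (0 : EuclideanSpace ℝ (Fin 3)) 1))
    (R : ℝ) (hR : 0 < R) (hRd : R < Metric.diam (Set.univ : Set S)) :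
    ∃ r₀ > (0 : ℝ), ∀ r ∈ Set.Ioo (0 : ℝ) r₀, ∀ z u v : S,
      u ∈ (Metric.ball z r)ᶜ → v ∈ (Metric.ball z r)ᶜ →
      R ≤ Metric.diam (connectedComponentIn (Metric.ball z r)ᶜ u) →
      R ≤ Metric.diam (connectedComponentIn (Metric.ball z r)ᶜ v) →
      connectedComponentIn (Metric.ball z r)ᶜ u = connectedComponentIn (Metric.ball z r)ᶜ v :=
  at_most_one_big_component_general hgeo hsphere R hR
end

section
/- Let (S,d) be a nonempty separable metric space and let ν be a Borel probability measure on S. Let δ > 0 and p ∈ (0,1] be such that ν(B(z,δ)) ≥ p for every z ∈ S. Let (z_i)_{i≥1} be an i.i.d. sequence of S-valued random variables, each with distribution ν, defined on a probability space (Ω,ℱ,ℙ). Then for every N ∈ ℕ, ℙ[ there exists z ∈ S with d(z,z_i) > 2δ for all 1 ≤ i ≤ N ] ≤ p^{-1}(1−p)^N. Equivalently, with probability at least 1 − p^{-1}(1−p)^N, the closed balls of radius 2δ centered at z₁,…,z_N cover S. -/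
/-!
Draw an extra point `x ∼ ν` independently of the sample and consider the event that `x` is
`δ`-far from every `zᵢ`. Given `x`, the `zᵢ` avoid `B(x, δ)` independently, each with probability
at most `1 - p`, so the event has probability at most `(1 - p)^N`. Conversely, whenever some `z`
is `2δ`-far from the sample, every `x ∈ B(z, δ)` is `δ`-far from it, so given the sample the
event has probability at least `p`. Comparing the two bounds by Fubini gives the claim.
-/

open MeasureTheory ProbabilityTheory Metric
open scoped ENNReal

namespace MeasureTheory.Measure

variable {α β : Type*} [MeasurableSpace α] [MeasurableSpace β] {μ : Measure α} {ν : Measure β}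
  {s : Set (α × β)}

theorem mul_measure_setOf_le_measure_prodMk_right_le_prod [SFinite μ] [SFinite ν]
    (hs : MeasurableSet s) (c : ℝ≥0∞) :
    c * ν {y | c ≤ μ ((fun x => (x, y)) ⁻¹' s)} ≤ μ.prod ν s := by
  rw [prod_apply_symm hs]
  exact mul_meas_ge_le_lintegral₀ (measurable_measure_prodMk_right hs).aemeasurable c

theorem prod_apply_le_of_forall_measure_prodMk_le [IsProbabilityMeasure μ] [SFinite ν]
    (hs : MeasurableSet s) {c : ℝ≥0∞} (h : ∀ x, ν (Prod.mk x ⁻¹' s) ≤ c) :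
    μ.prod ν s ≤ c := by
  rw [prod_apply hs]
  calc ∫⁻ x, ν (Prod.mk x ⁻¹' s) ∂μ ≤ ∫⁻ _, c ∂μ := lintegral_mono h
    _ = c := by simp

end MeasureTheory.Measure

namespace ProbabilityTheory.iIndepFun

variable {Ω ι S : Type*} [MeasurableSpace Ω] [MeasurableSpace S] {P : Measure Ω}
  {ν : Measure S} {z : ι → Ω → S} {B : Set S}

theorem measure_forall_mem_eq_pow (hindep : iIndepFun z P) (hmeas : ∀ i, Measurable (z i))
    (hdist : ∀ i, P.map (z i) = ν) (hB : MeasurableSet B) (s : Finset ι) :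
    P {ω | ∀ i ∈ s, z i ω ∈ B} = ν B ^ s.card := by
  have hinter : {ω | ∀ i ∈ s, z i ω ∈ B} = ⋂ i ∈ s, z i ⁻¹' B := by ext; simp
  rw [hinter, hindep.measure_inter_preimage_eq_mul s fun _ _ => hB]
  simp_rw [← Measure.map_apply (hmeas _) hB, hdist, Finset.prod_const]

theorem measure_forall_mem_compl_le [IsProbabilityMeasure ν] (hindep : iIndepFun z P)
    (hmeas : ∀ i, Measurable (z i)) (hdist : ∀ i, P.map (z i) = ν) (hB : MeasurableSet B)
    {q : ℝ≥0∞} (hq : q ≤ ν B) (s : Finset ι) :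
    P {ω | ∀ i ∈ s, z i ω ∈ Bᶜ} ≤ (1 - q) ^ s.card := by
  rw [hindep.measure_forall_mem_eq_pow hmeas hdist hB.compl, prob_compl_eq_one_sub hB]
  gcongr

end ProbabilityTheory.iIndepFun

theorem lt_dist_of_mem_ball_of_add_lt_dist {S : Type*} [PseudoMetricSpace S] {x y z : S}
    {ε r : ℝ} (hx : x ∈ ball z ε) (h : ε + r < dist z y) : r < dist x y := by
  rw [mem_ball'] at hx
  linarith [dist_triangle z x y]

theorem iid_net_covering_general {S : Type*} [MetricSpace S]
    [TopologicalSpace.SeparableSpace S] [MeasurableSpace S] [BorelSpace S]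
    {Ω : Type*} [MeasurableSpace Ω] (P : MeasureTheory.Measure Ω)
    [MeasureTheory.IsProbabilityMeasure P]
    (ν : MeasureTheory.Measure S) [MeasureTheory.IsProbabilityMeasure ν]
    (δ p : ℝ) (hp0 : 0 < p) (hp1 : p ≤ 1)
    (hball : ∀ z : S, ENNReal.ofReal p ≤ ν (Metric.ball z δ))
    (z : ℕ → Ω → S) (hmeas : ∀ i, Measurable (z i))
    (hindep : ProbabilityTheory.iIndepFun z P)
    (hdist : ∀ i, MeasureTheory.Measure.map (z i) P = ν)
    (N : ℕ) :
    P {ω | ∃ zp : S, ∀ i ∈ Finset.Icc 1 N, 2 * δ < dist zp (z i ω)}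
      ≤ ENNReal.ofReal (p⁻¹ * (1 - p) ^ N) := by
  set s := Finset.Icc 1 N
  set q := ENNReal.ofReal p
  set A : Set (S × Ω) := {x | ∀ i ∈ s, δ < dist x.1 (z i x.2)}
  have hA : MeasurableSet A := by
    simp only [A, Set.ofPred_forall]
    exact Finset.measurableSet_biInter s fun i _ =>
      measurableSet_lt measurable_const (measurable_fst.dist ((hmeas i).comp measurable_snd))
  have hfar (x : S) : P (Prod.mk x ⁻¹' A) ≤ (1 - q) ^ N := calc
    _ ≤ P {ω | ∀ i ∈ s, z i ω ∈ (ball x δ)ᶜ} := measure_mono fun ω hω i hi => by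
      simpa [dist_comm] using (hω i hi).le
    _ ≤ (1 - q) ^ s.card :=
      hindep.measure_forall_mem_compl_le hmeas hdist measurableSet_ball (hball x) s
    _ = (1 - q) ^ N := by simp [s]
  have hnear : {ω | ∃ zp : S, ∀ i ∈ s, 2 * δ < dist zp (z i ω)} ⊆
      {ω | q ≤ ν ((fun x => (x, ω)) ⁻¹' A)} := fun ω ⟨zp, hzp⟩ =>
    (hball zp).trans <| measure_mono fun x hx i hi =>
      lt_dist_of_mem_ball_of_add_lt_dist hx ((two_mul δ).symm ▸ hzp i hi)
  have key : q * P {ω | ∃ zp : S, ∀ i ∈ s, 2 * δ < dist zp (z i ω)} ≤ (1 - q) ^ N := calc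
    _ ≤ q * P {ω | q ≤ ν ((fun x => (x, ω)) ⁻¹' A)} := by gcongr
    _ ≤ ν.prod P A := Measure.mul_measure_setOf_le_measure_prodMk_right_le_prod hA q
    _ ≤ (1 - q) ^ N := Measure.prod_apply_le_of_forall_measure_prodMk_le hA hfar
  rw [ENNReal.ofReal_mul (inv_nonneg.2 hp0.le), ENNReal.ofReal_inv_of_pos hp0,
    ENNReal.ofReal_pow (sub_nonneg.2 hp1), ENNReal.ofReal_sub _ hp0.le, ENNReal.ofReal_one,
    ← ENNReal.div_eq_inv_mul, ENNReal.le_div_iff_mul_le (by simp [hp0]) (by simp),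
    mul_comm]
  exact key

/-- If `ν(B(z,δ)) ≥ p` for every `z`, then for i.i.d. samples `z₁, …, z_N` from `ν`, the
probability that some point of `S` is at distance more than `2δ` from all of them is at most
`p⁻¹ (1-p)^N`. -/
theorem iid_net_covering {S : Type*} [MetricSpace S] [Nonempty S]
    [TopologicalSpace.SeparableSpace S] [MeasurableSpace S] [BorelSpace S]
    {Ω : Type*} [MeasurableSpace Ω] (P : MeasureTheory.Measure Ω)
    [MeasureTheory.IsProbabilityMeasure P]
    (ν : MeasureTheory.Measure S) [MeasureTheory.IsProbabilityMeasure ν]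
    (δ p : ℝ) (hδ : 0 < δ) (hp0 : 0 < p) (hp1 : p ≤ 1)
    (hball : ∀ z : S, ENNReal.ofReal p ≤ ν (Metric.ball z δ))
    (z : ℕ → Ω → S) (hmeas : ∀ i, Measurable (z i))
    (hindep : ProbabilityTheory.iIndepFun z P)
    (hdist : ∀ i, MeasureTheory.Measure.map (z i) P = ν)
    (N : ℕ) :
    P {ω | ∃ zp : S, ∀ i ∈ Finset.Icc 1 N, 2 * δ < dist zp (z i ω)}
      ≤ ENNReal.ofReal (p⁻¹ * (1 - p) ^ N) :=
  iid_net_covering_general P ν δ p hp0 hp1 hball z hmeas hindep hdist N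
end

section
/- Let (X,d) be a metric space, let ε ≥ 0, and for i = 1,2 let η_i : [0,T_i] → X be unit-speed geodesics such that d(η₁(0),η₂(0)) ≤ ε and the Hausdorff distance between the images η₁([0,T₁]) and η₂([0,T₂]) is at most ε. Then: (i) for every t ∈ [0,T₂] there exists s ∈ [0,T₁] with d(η₁(s),η₂(t)) ≤ ε and |s − t| ≤ 2ε; and (ii) for every t ∈ [0, min(T₁,T₂)] one has d(η₁(t),η₂(t)) ≤ 3ε. -/
/-- If two geodesics have starting points within `ε` and images within Hausdorff distance `ε`,
then every time `t` of `η₂` has a matching time `s` of `η₁` with `|s - t| ≤ 2ε` and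
`d(η₁(s), η₂(t)) ≤ ε`, and the geodesics track each other: `d(η₁(t), η₂(t)) ≤ 3ε` for
`t ∈ [0, min(T₁, T₂)]`. -/
theorem geodesics_track_each_other {X : Type*} [MetricSpace X] (ε T₁ T₂ : ℝ) (hε : 0 ≤ ε)
    (hT₁ : 0 ≤ T₁) (hT₂ : 0 ≤ T₂) (η₁ η₂ : ℝ → X)
    (h₁ : IsUnitSpeedGeodesic η₁ T₁) (h₂ : IsUnitSpeedGeodesic η₂ T₂)
    (hstart : dist (η₁ 0) (η₂ 0) ≤ ε)
    (hH : EMetric.hausdorffEdist (η₁ '' Set.Icc 0 T₁) (η₂ '' Set.Icc 0 T₂) ≤ ENNReal.ofReal ε) :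
    (∀ t ∈ Set.Icc (0 : ℝ) T₂, ∃ s ∈ Set.Icc (0 : ℝ) T₁,
      dist (η₁ s) (η₂ t) ≤ ε ∧ |s - t| ≤ 2 * ε) ∧
    (∀ t ∈ Set.Icc (0 : ℝ) (min T₁ T₂), dist (η₁ t) (η₂ t) ≤ 3 * ε) := by
  -- η₁ is 1-Lipschitz on [0,T₁], hence its image is compact
  have hlip : LipschitzOnWith 1 η₁ (Set.Icc 0 T₁) := by
    intro x hx y hy
    rw [edist_dist, h₁ x hx y hy, ENNReal.coe_one, one_mul, edist_dist, Real.dist_eq]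
  have hcomp : IsCompact (η₁ '' Set.Icc 0 T₁) :=
    isCompact_Icc.image_of_continuousOn hlip.continuousOn
  have hne : (η₁ '' Set.Icc 0 T₁).Nonempty :=
    ⟨η₁ 0, ⟨0, ⟨le_refl 0, hT₁⟩, rfl⟩⟩
  have key : ∀ t ∈ Set.Icc (0 : ℝ) T₂, ∃ s ∈ Set.Icc (0 : ℝ) T₁,
      dist (η₁ s) (η₂ t) ≤ ε ∧ |s - t| ≤ 2 * ε := by
    intro t ht
    obtain ⟨y, hy, hyd⟩ := hcomp.exists_infEdist_eq_edist hne (η₂ t)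
    obtain ⟨s, hs, rfl⟩ := hy
    have hmem : η₂ t ∈ η₂ '' Set.Icc 0 T₂ := ⟨t, ht, rfl⟩
    have hinf : EMetric.infEdist (η₂ t) (η₁ '' Set.Icc 0 T₁) ≤ ENNReal.ofReal ε :=
      le_trans (EMetric.infEdist_le_hausdorffEdist_of_mem hmem)
        (by rwa [EMetric.hausdorffEdist_comm])
    have hedist : edist (η₂ t) (η₁ s) ≤ ENNReal.ofReal ε := hyd ▸ hinf
    have hdist : dist (η₁ s) (η₂ t) ≤ ε := by
      rw [dist_comm]
      exact (edist_le_ofReal hε).mp hedist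
    refine ⟨s, hs, hdist, ?_⟩
    have hs0 : dist (η₁ 0) (η₁ s) = |0 - s| := h₁ 0 ⟨le_refl 0, hT₁⟩ s hs
    have ht0 : dist (η₂ 0) (η₂ t) = |0 - t| := h₂ 0 ⟨le_refl 0, hT₂⟩ t ht
    have habs : |dist (η₁ 0) (η₁ s) - dist (η₂ 0) (η₂ t)| ≤
        dist (η₁ 0) (η₂ 0) + dist (η₁ s) (η₂ t) := by
      have t1 := dist_triangle4 (η₁ 0) (η₂ 0) (η₂ t) (η₁ s)
      have t2 := dist_triangle4 (η₂ 0) (η₁ 0) (η₁ s) (η₂ t)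
      rw [abs_sub_le_iff]
      constructor
      · rw [dist_comm (η₂ t) (η₁ s)] at t1; linarith
      · rw [dist_comm (η₂ 0) (η₁ 0)] at t2; linarith
    rw [hs0, ht0, abs_sub_comm (0:ℝ) s, abs_sub_comm (0:ℝ) t, sub_zero, sub_zero,
      abs_of_nonneg hs.1, abs_of_nonneg ht.1] at habs
    calc |s - t| ≤ dist (η₁ 0) (η₂ 0) + dist (η₁ s) (η₂ t) := habs
      _ ≤ ε + ε := add_le_add hstart hdist
      _ = 2 * ε := by ring
  refine ⟨key, fun t ht => ?_⟩
  have ht₁ : t ∈ Set.Icc (0 : ℝ) T₁ := ⟨ht.1, le_trans ht.2 (min_le_left _ _)⟩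
  have ht₂ : t ∈ Set.Icc (0 : ℝ) T₂ := ⟨ht.1, le_trans ht.2 (min_le_right _ _)⟩
  obtain ⟨s, hs, hd, hst⟩ := key t ht₂
  calc dist (η₁ t) (η₂ t) ≤ dist (η₁ t) (η₁ s) + dist (η₁ s) (η₂ t) := dist_triangle _ _ _
    _ = |t - s| + dist (η₁ s) (η₂ t) := by rw [h₁ t ht₁ s hs]
    _ ≤ 2 * ε + ε := add_le_add (by rwa [abs_sub_comm]) hd
    _ = 3 * ε := by ring
end

section
/- Let (S,d) be a geodesic metric space, let x,y ∈ S with x ≠ y, and let γ : [0,d(x,y)] → S be a unit-speed geodesic with γ(0) = x and γ(d(x,y)) = y. Let ε > 0 and s ∈ (2ε, d(x,y) − 2ε), and set w = γ(d(x,y) − s), so that d(x,w) = d(x,y) − s and d(w,y) = s. Set r = d(x,y) − s + 2ε (so that 0 < r < d(x,y)), and let fb = fb_y(x,r) be the filled metric ball, i.e. the complement in S of the connected component of S ∖ B(x,r) containing y. If x and y lie in two different connected components of S ∖ B(w,2ε), then every point z of the topological frontier of fb satisfies d(z,w) ≤ 6ε. -/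
lemma IsUnitSpeedGeodesic.continuousOn {X : Type*} [MetricSpace X] {η : ℝ → X} {T : ℝ}
    (h : IsUnitSpeedGeodesic η T) : ContinuousOn η (Set.Icc 0 T) := by
  apply LipschitzOnWith.continuousOn (K := 1)
  rw [lipschitzOnWith_iff_dist_le_mul]
  intro a ha b hb
  rw [h a ha b hb, Real.dist_eq, NNReal.coe_one, one_mul]

/-- In a geodesic space, metric balls are preconnected. -/
lemma ball_isPreconnected {S : Type*} [MetricSpace S]
    (hgeo : ∀ a b : S, ∃ η : ℝ → S,
      IsUnitSpeedGeodesic η (dist a b) ∧ η 0 = a ∧ η (dist a b) = b)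
    (c : S) (δ : ℝ) : IsPreconnected (Metric.ball c δ) := by
  rcases le_or_gt δ 0 with hδ | hδ
  · rw [Metric.ball_eq_empty.2 hδ]; exact isPreconnected_empty
  · apply isPreconnected_of_forall c
    intro p hp
    obtain ⟨η, hη, hη0, hηT⟩ := hgeo c p
    refine ⟨η '' Set.Icc 0 (dist c p), ?_, ?_, ?_, ?_⟩
    · rintro _ ⟨t, ht, rfl⟩
      rw [Metric.mem_ball, dist_comm, ← hη0,
        hη 0 ⟨le_rfl, dist_nonneg⟩ t ht, abs_of_nonpos (by linarith [ht.1])]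
      have := ht.2
      have hpb := Metric.mem_ball.1 hp
      rw [dist_comm] at hpb
      linarith
    · exact ⟨0, ⟨le_rfl, dist_nonneg⟩, hη0⟩
    · exact ⟨dist c p, ⟨dist_nonneg, le_rfl⟩, hηT⟩
    · exact isPreconnected_Icc.image _ hη.continuousOn

/-- Bottleneck estimate: if `w = γ(d(x,y) - s)` lies on a geodesic `γ` from `x` to `y`, with
`2ε < s < d(x,y) - 2ε`, `r = d(x,y) - s + 2ε`, and `B(w, 2ε)` disconnects `x` from `y`, then
every point of the frontier of the filled metric ball `fb_y(x,r)` is within distance `6ε`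
of `w`. -/
theorem filled_ball_frontier_near_bottleneck {S : Type*} [MetricSpace S]
    (hgeo : ∀ a b : S, ∃ η : ℝ → S,
      IsUnitSpeedGeodesic η (dist a b) ∧ η 0 = a ∧ η (dist a b) = b)
    (x y : S) (hxy : x ≠ y)
    (γ : ℝ → S) (hγ : IsUnitSpeedGeodesic γ (dist x y)) (hγ0 : γ 0 = x)
    (hγT : γ (dist x y) = y)
    (ε s : ℝ) (hε : 0 < ε) (hs : 2 * ε < s) (hs' : s < dist x y - 2 * ε)
    (w : S) (hw : w = γ (dist x y - s))
    (r : ℝ) (hr : r = dist x y - s + 2 * ε)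
    (hx : x ∈ (Metric.ball w (2 * ε))ᶜ) (hy : y ∈ (Metric.ball w (2 * ε))ᶜ)
    (hdisc : connectedComponentIn (Metric.ball w (2 * ε))ᶜ x ≠
      connectedComponentIn (Metric.ball w (2 * ε))ᶜ y) :
    ∀ z ∈ frontier ((connectedComponentIn (Metric.ball x r)ᶜ y)ᶜ), dist z w ≤ 6 * ε := by
  intro z hz
  have hd0 : 0 < dist x y := dist_pos.2 hxy
  set F := (Metric.ball x r)ᶜ with hF
  set C := connectedComponentIn F y with hC
  -- distance from x to w
  have hxw : dist x w = dist x y - s := by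
    have key := hγ 0 ⟨le_rfl, hd0.le⟩ (dist x y - s) ⟨by linarith, by linarith⟩
    rw [hγ0, ← hw] at key
    rw [key, abs_of_nonpos (by linarith)]
    ring
  -- the small ball around w is inside the big ball around x
  have hballs : Metric.ball w (2 * ε) ⊆ Metric.ball x r := by
    intro p hp
    rw [Metric.mem_ball] at hp ⊢
    calc dist p x ≤ dist p w + dist w x := dist_triangle p w x
    _ < 2 * ε + (dist x y - s) := by rw [dist_comm w x, hxw]; linarith
    _ = r := by rw [hr]; ring
  have hFclosed : IsClosed F := Metric.isOpen_ball.isClosed_compl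
  have hyF : y ∈ F := by
    rw [hF, Set.mem_compl_iff, Metric.mem_ball, dist_comm]
    push_neg
    rw [hr]; linarith
  -- the component C is closed
  have hCclosed : closure C ⊆ C :=
    isPreconnected_connectedComponentIn.closure.subset_connectedComponentIn
      (subset_closure (mem_connectedComponentIn hyF))
      (closure_minimal (connectedComponentIn_subset F y) hFclosed)
  have hzC : z ∈ C := by
    have hzf : z ∈ frontier C := by rwa [frontier_compl] at hz
    exact hCclosed hzf.1
  have hzcl : z ∈ closure Cᶜ := frontier_subset_closure hz
  -- dist x z ≤ r
  have hzle : dist x z ≤ r := by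
    by_contra h
    push_neg at h
    set δ := dist x z - r with hδdef
    have hδ : 0 < δ := by linarith
    have hballF : Metric.ball z δ ⊆ F := by
      intro p hp
      rw [Metric.mem_ball] at hp
      rw [hF, Set.mem_compl_iff, Metric.mem_ball]
      push_neg
      have h1 := dist_triangle x p z
      rw [dist_comm x p] at h1
      linarith
    have hballC : Metric.ball z δ ⊆ C := by
      have h1 := (ball_isPreconnected hgeo z δ).subset_connectedComponentIn
        (Metric.mem_ball_self hδ) hballF
      rwa [hC, connectedComponentIn_eq hzC]
    obtain ⟨p, hpc, hpd⟩ := Metric.mem_closure_iff.1 hzcl δ hδ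
    exact hpc (hballC (by rwa [Metric.mem_ball, dist_comm]))
  have hzge : r ≤ dist x z := by
    have := connectedComponentIn_subset F y hzC
    rw [hF, Set.mem_compl_iff, Metric.mem_ball] at this
    push_neg at this
    rwa [dist_comm]
  have hzr : dist x z = r := le_antisymm hzle hzge
  -- main contradiction argument
  by_contra hcon
  push_neg at hcon
  obtain ⟨η, hη, hη0, hηT⟩ := hgeo x z
  set G := η '' Set.Icc 0 (dist x z) with hG
  have hGsub : G ⊆ (Metric.ball w (2 * ε))ᶜ := by
    rintro _ ⟨t, ht, rfl⟩
    rw [Set.mem_compl_iff, Metric.mem_ball]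
    push_neg
    by_contra h2
    push_neg at h2
    have h1 : dist x (η t) = t := by
      have key := hη 0 ⟨le_rfl, dist_nonneg⟩ t ht
      rw [hη0] at key
      rw [key, abs_of_nonpos (by linarith [ht.1])]
      ring
    have h3 : dist (η t) z = dist x z - t := by
      have key := hη t ht (dist x z) ⟨dist_nonneg, le_rfl⟩
      rw [hηT] at key
      rw [key, abs_of_nonpos (by linarith [ht.2])]
      ring
    have h4 : dist x w ≤ dist x (η t) + dist (η t) w := dist_triangle x (η t) w
    have h5 : dist z w ≤ dist z (η t) + dist (η t) w := dist_triangle z (η t) w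
    rw [dist_comm z (η t)] at h5
    rw [hxw] at h4
    rw [h1] at h4
    rw [h3] at h5
    rw [hzr, hr] at h5
    -- h4 : dist x y - s ≤ t + dist (η t) w, h2 : dist (η t) w < 2ε
    -- so t > dist x y - s - 2ε = r - 4ε; h5 gives dist z w < r - t + 2ε < 6ε
    linarith
  have hGpre : IsPreconnected G := isPreconnected_Icc.image _ hη.continuousOn
  have hz_in_x : z ∈ connectedComponentIn (Metric.ball w (2 * ε))ᶜ x :=
    hGpre.subset_connectedComponentIn ⟨0, ⟨le_rfl, dist_nonneg⟩, hη0⟩ hGsub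
      ⟨dist x z, ⟨dist_nonneg, le_rfl⟩, hηT⟩
  have hCsub : C ⊆ (Metric.ball w (2 * ε))ᶜ :=
    (connectedComponentIn_subset F y).trans (Set.compl_subset_compl.2 hballs)
  have hz_in_y : z ∈ connectedComponentIn (Metric.ball w (2 * ε))ᶜ y :=
    (isPreconnected_connectedComponentIn (F := F) (x := y)).subset_connectedComponentIn
      (mem_connectedComponentIn hyF) hCsub hzC
  exact hdisc ((connectedComponentIn_eq hz_in_x).trans (connectedComponentIn_eq hz_in_y).symm)
end

section
/- Let (S,d) be a geodesic metric space, let x,y ∈ S, and let 0 < r < d(x,y). Let U be the connected component of S ∖ B(x,r) containing y, and let fb = S ∖ U be the filled metric ball fb_y(x,r). Then B(x,r) ⊆ fb, y ∉ fb, and every point z of the topological frontier of fb satisfies d(x,z) = r. -/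
/-- In a geodesic metric space, every open ball is path-connected. -/
lemma ball_isPathConnected {S : Type*} [MetricSpace S]
    (hgeo : ∀ a b : S, ∃ η : ℝ → S,
      IsUnitSpeedGeodesic η (dist a b) ∧ η 0 = a ∧ η (dist a b) = b)
    (z : S) (ε : ℝ) (hε : 0 < ε) : IsPathConnected (Metric.ball z ε) := by
  refine ⟨z, Metric.mem_ball_self hε, ?_⟩
  intro w hw
  obtain ⟨η, hηg, hη0, hηT⟩ := hgeo z w
  set T := dist z w with hT
  have hT0 : 0 ≤ T := dist_nonneg
  have hlip : LipschitzOnWith 1 η (Set.Icc 0 T) := by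
    intro s hs t ht
    rw [edist_dist, edist_dist, hηg s hs t ht]
    simp [Real.dist_eq]
  have hcont : ContinuousOn η (Set.Icc 0 T) := hlip.continuousOn
  have hmap : ∀ t : unitInterval, (t : ℝ) * T ∈ Set.Icc (0 : ℝ) T := by
    intro t
    constructor
    · exact mul_nonneg t.2.1 hT0
    · calc (t : ℝ) * T ≤ 1 * T := by
            exact mul_le_mul_of_nonneg_right t.2.2 hT0
        _ = T := one_mul T
  refine ⟨⟨⟨fun t => η ((t : ℝ) * T), ?_⟩, ?_, ?_⟩, ?_⟩
  · exact hcont.comp_continuous (by continuity) hmap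
  · simp [hη0]
  · simpa using hηT
  · intro t
    have hd : dist z (η ((t : ℝ) * T)) = (t : ℝ) * T := by
      have h := hηg 0 ⟨le_refl 0, hT0⟩ ((t : ℝ) * T) (hmap t)
      rw [hη0] at h
      rw [h, zero_sub, abs_neg, abs_of_nonneg (hmap t).1]
    have hlt : dist z (η ((t : ℝ) * T)) < ε := by
      rw [hd]
      calc (t : ℝ) * T ≤ T := by
            nlinarith [t.2.2, t.2.1, hT0]
        _ < ε := by rw [hT, dist_comm]; exact Metric.mem_ball.mp hw
    simpa [Metric.mem_ball, dist_comm] using hlt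

/-- Basic properties of the filled metric ball `fb_y(x,r) = (connectedComponentIn B(x,r)ᶜ y)ᶜ`
in a geodesic metric space: it contains `B(x,r)`, does not contain `y`, and every point of its
topological frontier is at distance exactly `r` from `x`. -/
theorem filled_ball_basic {S : Type*} [MetricSpace S]
    (hgeo : ∀ a b : S, ∃ η : ℝ → S,
      IsUnitSpeedGeodesic η (dist a b) ∧ η 0 = a ∧ η (dist a b) = b)
    (x y : S) (r : ℝ) (hr0 : 0 < r) (hr1 : r < dist x y)
    (U : Set S) (hU : U = connectedComponentIn (Metric.ball x r)ᶜ y) :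
    Metric.ball x r ⊆ Uᶜ ∧ y ∉ Uᶜ ∧ ∀ z ∈ frontier (Uᶜ), dist x z = r := by
  have hyF : y ∈ (Metric.ball x r)ᶜ := by
    simp [Metric.mem_ball, dist_comm]
    linarith
  have hUF : U ⊆ (Metric.ball x r)ᶜ := hU ▸ connectedComponentIn_subset _ _
  have hyU : y ∈ U := hU ▸ mem_connectedComponentIn hyF
  have hFcl : IsClosed (Metric.ball x r)ᶜ := isClosed_compl_iff.mpr Metric.isOpen_ball
  have hUclosed : IsClosed U := by
    have hpc : IsPreconnected (closure U) := by
      rw [hU]; exact (isPreconnected_connectedComponentIn).closure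
    have hsubF : closure U ⊆ (Metric.ball x r)ᶜ := by
      calc closure U ⊆ closure (Metric.ball x r)ᶜ := closure_mono hUF
        _ = (Metric.ball x r)ᶜ := hFcl.closure_eq
    have : closure U ⊆ U := by
      conv_rhs => rw [hU]
      exact hpc.subset_connectedComponentIn (subset_closure hyU) hsubF
    exact isClosed_of_closure_subset this
  refine ⟨fun w hw => fun hwU => hUF hwU hw, fun h => h hyU, ?_⟩
  intro z hz
  rw [frontier_compl] at hz
  have hzU : z ∈ U := hUclosed.closure_eq ▸ hz.1
  have hge : r ≤ dist x z := by
    have := hUF hzU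
    simp [Metric.mem_ball, dist_comm] at this
    linarith
  by_contra hne
  have hgt : r < dist x z := lt_of_le_of_ne hge (fun h => hne h.symm)
  set ε := dist x z - r with hε
  have hε0 : 0 < ε := by linarith
  have hball : Metric.ball z ε ⊆ (Metric.ball x r)ᶜ := by
    intro w hw
    simp only [Metric.mem_ball] at hw ⊢
    intro hwx
    have h2 : dist x z ≤ dist x w + dist w z := dist_triangle x w z
    have e1 := dist_comm w x
    have e2 := dist_comm w z
    simp only [Set.mem_compl_iff, Metric.mem_ball] at *
    have hε' : ε = dist x z - r := rfl
    linarith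
  have hconn : IsPreconnected (Metric.ball z ε) :=
    (ball_isPathConnected hgeo z ε hε0).isConnected.isPreconnected
  have hsub : Metric.ball z ε ⊆ connectedComponentIn (Metric.ball x r)ᶜ z :=
    hconn.subset_connectedComponentIn (Metric.mem_ball_self hε0) hball
  have hcc : connectedComponentIn (Metric.ball x r)ᶜ z = U := by
    rw [hU]
    exact (connectedComponentIn_eq (hU ▸ hzU)).symm
  have hsubU : Metric.ball z ε ⊆ U := hcc ▸ hsub
  -- z ∈ closure Uᶜ: every ball around z meets Uᶜ
  have hzc : z ∈ closure Uᶜ := by rw [closure_compl]; exact hz.2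
  obtain ⟨w, hwU, hwz⟩ := Metric.mem_closure_iff.mp hzc ε hε0
  exact hwU (hsubU (by simpa [Metric.mem_ball, dist_comm] using hwz))
end
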